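/- arXiv:1606.08472 — 5 statements merged into one kernel-verified Lean document; each statement's English description precedes it below -/
import Mathlib

section
/- Let (K,v) be a valued field of residue characteristic p > 0 such that K has no separable field extension of degree divisible by p. Then the residue field Kv is perfect. -/
/-!
Lift `x̄` to `a ∈ O` and pick `c ∈ O` with `0 < v(c)`, `c ≠ 0`. The polynomial
`f = X^p + cX - a` is monic and reduces to `X^p - x̄`. If `x̄` were not a `p`-th power,
`X^p - x̄` would be irreducible, hence so would `f` over `O` and, `O` being integrally closed,
over `K`. But `f' = p X^(p-1) + c` has constant term `c ≠ 0`, so `f` would be separable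
irreducible of degree `p`, and its splitting field a separable extension of `K` of degree
divisible by `p`.
-/

universe u

open Polynomial

section Trinomial

variable {R : Type*} [CommRing R] [Nontrivial R] {n : ℕ}

theorem natDegree_X_pow_add_C_mul_X_sub_C (hn : 2 ≤ n) (c a : R) :
    (X ^ n + C c * X - C a).natDegree = n := by
  have hcX : (C c * X).natDegree < n :=
    (natDegree_le_of_degree_le (degree_C_mul_X_le c)).trans_lt hn
  rw [natDegree_sub_C, natDegree_add_eq_left_of_natDegree_lt (by rwa [natDegree_X_pow]),
    natDegree_X_pow]

theorem monic_X_pow_add_C_mul_X_sub_C (hn : 2 ≤ n) (c a : R) :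
    (X ^ n + C c * X - C a).Monic := by
  have hcX : (C c * X).degree < (X ^ n : R[X]).degree := by
    rw [degree_X_pow]; exact (degree_C_mul_X_le c).trans_lt (by exact_mod_cast hn)
  refine ((monic_X_pow n).add_of_left hcX).sub_of_left (degree_C_le.trans_lt ?_)
  rw [degree_add_eq_left_of_degree_lt hcX, degree_X_pow]
  exact_mod_cast (by omega : 0 < n)

end Trinomial

theorem separable_X_pow_add_C_mul_X_sub_C_of_irreducible {F : Type*} [Field F] {n : ℕ}
    (hn : 2 ≤ n) {c : F} (hc : c ≠ 0) (a : F) (hirr : Irreducible (X ^ n + C c * X - C a)) :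
    (X ^ n + C c * X - C a).Separable := by
  refine (separable_iff_derivative_ne_zero hirr).mpr fun h => hc ?_
  simpa [coeff_derivative, coeff_X_pow, show 1 ≠ n by omega] using congrArg (coeff · 0) h

theorem Polynomial.Monic.irreducible_map_fraction_map_of_irreducible_map {R S K : Type*}
    [CommRing R] [IsDomain R] [IsIntegrallyClosed R] [CommRing S] [IsDomain S] [Field K]
    [Algebra R K] [IsFractionRing R K] (φ : R →+* S) {f : R[X]} (hf : f.Monic)
    (hirr : Irreducible (f.map φ)) : Irreducible (f.map (algebraMap R K)) :=
  hf.irreducible_iff_irreducible_map_fraction_map.mp (hf.irreducible_of_irreducible_map φ f hirr)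

theorem Polynomial.Separable.not_irreducible_of_forall_not_dvd_finrank {K : Type u} [Field K]
    {n : ℕ} (hK : ∀ (L : Type u) [Field L] [Algebra K L] [Algebra.IsSeparable K L]
      [FiniteDimensional K L], ¬ n ∣ Module.finrank K L)
    {f : K[X]} (hf : f.Separable) (hdeg : f.natDegree = n) : ¬ Irreducible f := by
  intro hirr
  let L := f.SplittingField
  have : IsGalois K L := IsGalois.of_separable_splitting_field hf
  obtain ⟨r, hr⟩ := (SplittingField.splits f).exists_eval_eq_zero
    (by rw [degree_map]; exact (degree_pos_of_irreducible hirr).ne')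
  have hmin : f * C f.leadingCoeff⁻¹ = minpoly K r :=
    minpoly.eq_of_irreducible hirr (by rwa [eval_map_algebraMap] at hr)
  have hdvd := minpoly.degree_dvd (IsIntegral.of_finite K r)
  rw [← hmin, natDegree_mul_C (inv_ne_zero (leadingCoeff_ne_zero.mpr hirr.ne_zero)), hdeg] at hdvd
  exact hK L hdvd

theorem residueField_perfect_of_no_separable_ext_general {K : Type u} [Field K]
    (O : ValuationSubring K) (p : ℕ) [Fact p.Prime]
    (hnontriv : ∃ c : K, c ≠ 0 ∧ O.valuation c < 1)
    (hsep : ∀ (L : Type u) [Field L] [Algebra K L] [Algebra.IsSeparable K L]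
      [FiniteDimensional K L], ¬ p ∣ Module.finrank K L) :
    ∀ x : IsLocalRing.ResidueField O, ∃ y, y ^ p = x := by
  have hp2 : 2 ≤ p := (Fact.out : p.Prime).two_le
  intro x
  by_contra! hx
  obtain ⟨c, hc0, hc1⟩ := hnontriv
  obtain ⟨a, rfl⟩ := IsLocalRing.residue_surjective x
  let c' : O := ⟨c, O.mem_of_valuation_le_one c hc1.le⟩
  have hc' : IsLocalRing.residue O c' = 0 :=
    (IsLocalRing.residue_eq_zero_iff c').mpr ((O.valuation_lt_one_iff c').mpr hc1)
  let f : O[X] := X ^ p + C c' * X - C a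
  have hred : f.map (IsLocalRing.residue O) = X ^ p - C (IsLocalRing.residue O a) := by
    simp [f, hc']
  have hfK : f.map (algebraMap O K) = X ^ p + C c * X - C (a : K) := by
    simp [f, c']
  have hirr : Irreducible (f.map (algebraMap O K)) :=
    (monic_X_pow_add_C_mul_X_sub_C hp2 c' a).irreducible_map_fraction_map_of_irreducible_map _
      (hred ▸ X_pow_sub_C_irreducible_of_prime Fact.out hx)
  rw [hfK] at hirr
  exact (separable_X_pow_add_C_mul_X_sub_C_of_irreducible hp2 hc0 _ hirr)
    |>.not_irreducible_of_forall_not_dvd_finrank hsep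
      (natDegree_X_pow_add_C_mul_X_sub_C hp2 c _) hirr

/-- Let `(K, v)` be a (nontrivially) valued field of residue characteristic
`p > 0` such that `K` has no (finite) separable field extension of degree divisible by `p`.
Then the residue field `Kv` is perfect, i.e. every element has a `p`-th root. -/
theorem residueField_perfect_of_no_separable_ext {K : Type u} [Field K]
    (O : ValuationSubring K) (p : ℕ) [Fact p.Prime]
    [CharP (IsLocalRing.ResidueField O) p]
    (hnontriv : ∃ c : K, c ≠ 0 ∧ O.valuation c < 1)
    (hsep : ∀ (L : Type u) [Field L] [Algebra K L] [Algebra.IsSeparable K L]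
      [FiniteDimensional K L], ¬ p ∣ Module.finrank K L) :
    ∀ x : IsLocalRing.ResidueField O, ∃ y, y ^ p = x :=
  residueField_perfect_of_no_separable_ext_general O p hnontriv hsep
end

section
/- Let (K,v) be a spherically complete valued field (every chain of closed balls has nonempty intersection). Then (K,v) is algebraically maximal, i.e., it admits no proper immediate algebraic extension. -/
universe u

/-!
If `x ∈ L \ K` and `c ∈ K`, immediacy lets one rescale `x - c` to a unit, subtract a residue
representative and thereby find `c' ∈ K` strictly closer to `x`. So `x` has no best approximation
in `K`. On the other hand the balls `{y | v (y - c) ≤ w (x - c)}` form a chain, and any point in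
their intersection, which exists by spherical completeness, is a best approximation.
-/

section ApproxBall

variable {K L Γ₀ : Type*} [Field K] [Field L] [Algebra K L] [LinearOrderedCommGroupWithZero Γ₀]
  {v : Valuation K Γ₀} {w : Valuation L Γ₀}

theorem exists_valuation_sub_algebraMap_lt (hw : ∀ x : K, w (algebraMap K L x) = v x)
    (hval : ∀ x : L, x ≠ 0 → ∃ y : K, w x = v y)
    (hres : ∀ x : L, w x = 1 → ∃ y : K, w (x - algebraMap K L y) < 1)
    {x : L} {c : K} (hc : algebraMap K L c ≠ x) :
    ∃ c' : K, w (x - algebraMap K L c') < w (x - algebraMap K L c) := by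
  have hxc : x - algebraMap K L c ≠ 0 := sub_ne_zero.mpr hc.symm
  obtain ⟨d, hd⟩ := hval _ hxc
  have hdL : algebraMap K L d ≠ 0 := by
    rw [← w.ne_zero_iff, hw, ← hd, w.ne_zero_iff]
    exact hxc
  have hunit : w ((x - algebraMap K L c) / algebraMap K L d) = 1 := by
    rw [map_div₀, hw, ← hd, div_self (w.ne_zero_iff.mpr hxc)]
  obtain ⟨e, he⟩ := hres _ hunit
  refine ⟨c + d * e, ?_⟩
  have hsplit : x - algebraMap K L (c + d * e) =
      ((x - algebraMap K L c) / algebraMap K L d - algebraMap K L e) * algebraMap K L d := by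
    rw [sub_mul, div_mul_cancel₀ _ hdL, map_add, map_mul]
    ring
  rw [hsplit, map_mul, hw, hd]
  exact mul_lt_of_lt_one_left (zero_lt_iff.mpr (hd ▸ w.ne_zero_iff.mpr hxc)) he

variable (v w) in
def approxBall (x : L) (c : K) : Set K :=
  {y | v (y - c) ≤ w (x - algebraMap K L c)}

variable (hw : ∀ x : K, w (algebraMap K L x) = v x)
include hw

theorem valuation_sub_algebraMap_le_of_mem_approxBall {x : L} {c z : K}
    (hz : z ∈ approxBall v w x c) :
    w (x - algebraMap K L z) ≤ w (x - algebraMap K L c) := by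
  have hsplit : x - algebraMap K L z = (x - algebraMap K L c) + algebraMap K L (c - z) := by
    rw [map_sub]; ring
  rw [hsplit]
  refine (w.map_add _ _).trans (max_le le_rfl ?_)
  rw [hw, Valuation.map_sub_swap]
  exact hz

theorem approxBall_subset_approxBall {x : L} {c₁ c₂ : K}
    (h : w (x - algebraMap K L c₁) ≤ w (x - algebraMap K L c₂)) :
    approxBall v w x c₁ ⊆ approxBall v w x c₂ := by
  intro y hy
  have hsplit : algebraMap K L (y - c₂) = (x - algebraMap K L c₂) - (x - algebraMap K L y) := by
    rw [map_sub]; ring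
  show v (y - c₂) ≤ w (x - algebraMap K L c₂)
  rw [← hw, hsplit]
  exact (w.map_sub _ _).trans
    (max_le le_rfl ((valuation_sub_algebraMap_le_of_mem_approxBall hw hy).trans h))

theorem isChain_range_approxBall (x : L) :
    IsChain (· ⊆ ·) (Set.range (approxBall v w x)) := by
  rintro _ ⟨c₁, rfl⟩ _ ⟨c₂, rfl⟩ -
  rcases le_total (w (x - algebraMap K L c₁)) (w (x - algebraMap K L c₂)) with h | h
  · exact Or.inl (approxBall_subset_approxBall hw h)
  · exact Or.inr (approxBall_subset_approxBall hw h)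

end ApproxBall

/-- Let `(K, v)` be a spherically complete valued field: every nonempty
chain (under inclusion) of closed balls `{x | v (x − a) ≤ γ}` (with `γ ≠ 0`) has nonempty
intersection. Then `(K, v)` is algebraically maximal: it admits no proper immediate
algebraic extension. Here an algebraic extension `(L, w)/(K, v)` (with `w` extending `v`)
is immediate if the value groups and residue fields agree. -/
theorem algMax_of_sphericallyComplete {K : Type u} [Field K]
    {Γ₀ : Type*} [LinearOrderedCommGroupWithZero Γ₀] (v : Valuation K Γ₀)
    (hsc : ∀ C : Set (Set K),
      (∀ S ∈ C, ∃ (a : K) (γ : Γ₀), γ ≠ 0 ∧ S = {x : K | v (x - a) ≤ γ}) →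
      C.Nonempty → IsChain (· ⊆ ·) C → (⋂₀ C).Nonempty) :
    ∀ (L : Type u) [Field L] [Algebra K L], Algebra.IsAlgebraic K L →
      ∀ w : Valuation L Γ₀, (∀ x : K, w (algebraMap K L x) = v x) →
        (∀ x : L, x ≠ 0 → ∃ y : K, w x = v y) →
        (∀ x : L, w x = 1 → ∃ y : K, w (x - algebraMap K L y) < 1) →
        Function.Surjective (algebraMap K L) := by
  intro L _ _ _ w hw hval hres x
  by_contra! hx
  obtain ⟨z, hz⟩ := hsc (Set.range (approxBall v w x))
    (by
      rintro _ ⟨c, rfl⟩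
      exact ⟨c, _, w.ne_zero_iff.mpr (sub_ne_zero.mpr (hx c).symm), rfl⟩)
    (Set.range_nonempty _) (isChain_range_approxBall hw x)
  obtain ⟨c, hc⟩ := exists_valuation_sub_algebraMap_lt hw hval hres (hx z)
  exact (hc.trans_le (valuation_sub_algebraMap_le_of_mem_approxBall hw (hz _ ⟨c, rfl⟩))).false
end

section
/- Let (F,u) be a henselian valued field with char(F) = 0, char(Fu) = p, O_u[1/p] = F, and F^×/(F^×)^p finite. Then the residue field Fu is perfect. -/
/-- Koenigsmann. Let `(F, u)` be a henselian valued field with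
`char F = 0`, residue characteristic `p > 0`, `O_u[1/p] = F` (every element of `F` becomes
integral after multiplying by a power of `p`), and `F^×/(F^×)^p` finite. Then the residue
field `Fu` is perfect, i.e. every element has a `p`-th root. -/
theorem residueField_perfect_of_finite_pth_power_classes {F : Type*} [Field F] [CharZero F]
    (O : ValuationSubring F) [HenselianLocalRing O] (p : ℕ) [Fact p.Prime]
    [CharP (IsLocalRing.ResidueField O) p]
    (hloc : ∀ x : F, ∃ n : ℕ, x * (p : F) ^ n ∈ O)
    (hfin : Finite (Fˣ ⧸ (powMonoidHom p : Fˣ →* Fˣ).range)) :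
    ∀ x : IsLocalRing.ResidueField O, ∃ y, y ^ p = x := by
  classical
  set K := IsLocalRing.ResidueField O with hK
  haveI : ExpChar K p := ExpChar.prime Fact.out
  have hp : p ≠ 0 := (Fact.out : p.Prime).ne_zero
  -- the p-th power map on K is injective
  have powinj : Function.Injective (fun x : K => x ^ p) := by
    intro a b hab
    have h0 : (a - b) ^ p = 0 := by
      rw [sub_pow_expChar]
      simpa [sub_eq_zero] using hab
    have := pow_eq_zero_iff hp |>.mp h0
    exact sub_eq_zero.mp this
  by_contra hcon
  push_neg at hcon
  obtain ⟨τ, hτ⟩ := hcon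
  -- choose a lift of τ
  obtain ⟨t, ht⟩ := IsLocalRing.residue_surjective (R := O) τ
  -- a section of the residue map
  set s : K → O := Function.surjInv (IsLocalRing.residue_surjective (R := O)) with hs
  have hsec : ∀ x : K, IsLocalRing.residue O (s x) = x := fun x =>
    Function.surjInv_eq _ x
  -- residue of t - (s x)^p is τ - x^p
  have hres : ∀ x : K, IsLocalRing.residue O (t - (s x) ^ p) = τ - x ^ p := by
    intro x
    rw [map_sub, map_pow, ht, hsec]
  -- the elements t - (s x)^p are units of O
  have hAunit : ∀ x : K, IsUnit (t - (s x) ^ p) := by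
    intro x
    rw [← IsLocalRing.notMem_maximalIdeal, ← IsLocalRing.residue_eq_zero_iff, hres,
      sub_eq_zero]
    exact fun h => hτ x h.symm
  -- in particular nonzero in F
  have hunit : ∀ x : K, ((t : F) - (s x : F) ^ p) ≠ 0 := by
    intro x hx
    have h0 : (t - (s x) ^ p : O) = 0 := by
      apply Subtype.ext
      push_cast
      simpa using hx
    exact (hAunit x).ne_zero h0
  -- the map into the p-th power class group
  set g : K → (Fˣ ⧸ (powMonoidHom p : Fˣ →* Fˣ).range) :=
    fun x => QuotientGroup.mk (Units.mk0 _ (hunit x)) with hg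
  have ginj : Function.Injective g := by
    intro x₁ x₂ hx
    rw [hg] at hx
    rw [QuotientGroup.eq] at hx
    obtain ⟨z, hz⟩ := hx
    -- in F : (t - (s x₁)^p) * z^p = t - (s x₂)^p
    have hzF : ((t : F) - (s x₁ : F) ^ p) * (z : F) ^ p = (t : F) - (s x₂ : F) ^ p := by
      have := congrArg (fun w : Fˣ => (((Units.mk0 _ (hunit x₁)) * w : Fˣ) : F)) hz
      simpa [powMonoidHom] using this
    -- z^p lies in O
    obtain ⟨uA, huA⟩ := hAunit x₁
    have hAF : ((uA⁻¹ : Oˣ) : O) * (t - (s x₁) ^ p) = 1 := by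
      rw [← huA]; exact_mod_cast uA.inv_mul
    have hAFinv : (((uA⁻¹ : Oˣ) : O) : F) * ((t : F) - (s x₁ : F) ^ p) = 1 := by
      have := congrArg (fun w : O => (w : F)) hAF
      push_cast at this
      simpa using this
    have hzp : (z : F) ^ p ∈ O := by
      have : (z : F) ^ p = (((uA⁻¹ : Oˣ) : O) : F) * ((t : F) - (s x₂ : F) ^ p) := by
        rw [← hzF, ← mul_assoc, hAFinv, one_mul]
      rw [this]
      exact mul_mem ((uA⁻¹ : Oˣ) : O).2 (by simpa using sub_mem t.2 (pow_mem (s x₂).2 p))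
    -- hence z lies in O
    have hzO : (z : F) ∈ O := by
      rcases O.mem_or_inv_mem (z : F) with h | h
      · exact h
      · have hzne : (z : F) ≠ 0 := z.ne_zero
        have hzeq : (z : F) = (z : F) ^ p * (((z : F))⁻¹) ^ (p - 1) := by
          rw [inv_pow, ← pow_sub₀ _ hzne (Nat.sub_le p 1),
            show p - (p - 1) = 1 by omega, pow_one]
        rw [hzeq]
        exact mul_mem hzp (pow_mem h _)
    set Z : O := ⟨(z : F), hzO⟩ with hZ
    -- the equation in O
    have hOeq : (t - (s x₁) ^ p) * Z ^ p = t - (s x₂) ^ p := by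
      apply Subtype.ext
      push_cast
      simpa using hzF
    -- pass to residues
    have hKeq : (τ - x₁ ^ p) * (IsLocalRing.residue O Z) ^ p = τ - x₂ ^ p := by
      have := congrArg (IsLocalRing.residue O) hOeq
      rw [map_mul, map_pow, hres, hres] at this
      exact this
    set η : K := IsLocalRing.residue O Z with hη
    -- show η = 1
    have hη1 : η = 1 := by
      by_contra hne
      have hkey : τ * (1 - η) ^ p = (x₂ - x₁ * η) ^ p := by
        rw [sub_pow_expChar, sub_pow_expChar, mul_pow]
        have hside : τ - x₂ ^ p = τ * η ^ p - x₁ ^ p * η ^ p := by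
          rw [← sub_mul, hKeq]
        linear_combination hside
      have h1η : (1 : K) - η ≠ 0 := by
        rw [sub_ne_zero]
        exact fun h => hne h.symm
      apply hτ ((x₂ - x₁ * η) * (1 - η)⁻¹)
      rw [mul_pow, ← hkey, inv_pow, mul_assoc, mul_inv_cancel₀ (pow_ne_zero p h1η), mul_one]
    rw [hη1, one_pow, mul_one] at hKeq
    have : x₁ ^ p = x₂ ^ p := by linear_combination -hKeq
    exact powinj this
  haveI : Finite K := Finite.of_injective g ginj
  have hsurj : Function.Surjective (fun x : K => x ^ p) :=
    Finite.injective_iff_surjective.mp powinj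
  obtain ⟨y, hy⟩ := hsurj τ
  exact hτ y hy
end

section
/- Let (K,v) be a valued field of equicharacteristic p > 0 which is algebraically maximal, whose value group is p-divisible, and whose residue field Kv is perfect and has no finite extension of degree divisible by p. Then for every finite extension (L,w)/(K,v), the ramification index e(w/v) is prime to p and the residue degree f(w/v) is prime to p. -/
universe u

/-- An extension of valued fields along `f : K →+* L`, where `L` carries the valuation
associated to the valuation subring `O'`, is *immediate* if the value groups agree and the
residue fields agree. -/
def Valuation.IsImmediateExt {K L : Type*} [Field K] [Field L] (f : K →+* L)
    (O' : ValuationSubring L) : Prop :=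
  (∀ x : L, x ≠ 0 → ∃ y : K, O'.valuation x = O'.valuation (f y)) ∧
  (∀ x : L, O'.valuation x = 1 → ∃ y : K, O'.valuation (x - f y) < 1)

/-- A valued field `(K, O)` is *algebraically maximal* if it has no proper immediate
algebraic extension. -/
def ValuationSubring.IsAlgMax (K : Type u) [Field K] (O : ValuationSubring K) : Prop :=
  ∀ (L : Type u) [Field L] [Algebra K L], Algebra.IsAlgebraic K L →
    ∀ O' : ValuationSubring L, O'.comap (algebraMap K L) = O →
      Valuation.IsImmediateExt (algebraMap K L) O' → Function.Surjective (algebraMap K L)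

/-- Transfer of valuation comparison along a ring hom whose comap of `O'` is `O`. -/
lemma val_le_val_iff {K L : Type*} [Field K] [Field L] (f : K →+* L)
    (O : ValuationSubring K) (O' : ValuationSubring L)
    (hcomap : O'.comap f = O) (a b : K) :
    O.valuation a ≤ O.valuation b ↔ O'.valuation (f a) ≤ O'.valuation (f b) := by
  rcases eq_or_ne b 0 with rb | rb
  · subst rb
    simp only [map_zero, le_zero_iff, Valuation.zero_iff, map_eq_zero]
  · have hb : O.valuation b ≠ 0 := (Valuation.ne_zero_iff _).mpr rb
    have hfb : O'.valuation (f b) ≠ 0 := (Valuation.ne_zero_iff _).mpr (by simp [rb])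
    rw [← div_le_one₀ (zero_lt_iff.mpr hb), ← map_div₀,
      ValuationSubring.valuation_le_one_iff, ← hcomap, ValuationSubring.mem_comap,
      ← ValuationSubring.valuation_le_one_iff, map_div₀ f, map_div₀,
      div_le_one₀ (zero_lt_iff.mpr hfb)]

lemma val_eq_val_iff {K L : Type*} [Field K] [Field L] (f : K →+* L)
    (O : ValuationSubring K) (O' : ValuationSubring L)
    (hcomap : O'.comap f = O) (a b : K) :
    O.valuation a = O.valuation b ↔ O'.valuation (f a) = O'.valuation (f b) := by
  rw [le_antisymm_iff, le_antisymm_iff, val_le_val_iff f O O' hcomap,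
    val_le_val_iff f O O' hcomap]

open IsLocalRing in
/-- Residues of elements of `O'` that are linearly independent over the residue field of `O`
lift to `K`-linearly independent elements of `L`; hence the residue degree is bounded by
the degree of the field extension. -/
lemma residue_card_le {K L : Type*} [Field K] [Field L] [Algebra K L] [FiniteDimensional K L]
    (O : ValuationSubring K) (O' : ValuationSubring L)
    (hmem : ∀ y : K, y ∈ O → algebraMap K L y ∈ O')
    [Algebra (ResidueField O) (ResidueField O')]
    (hcompat : ∀ (y : K) (hy : y ∈ O),
      algebraMap (ResidueField O) (ResidueField O') (residue O ⟨y, hy⟩) =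
        residue O' ⟨algebraMap K L y, hmem y hy⟩)
    (s : Finset (ResidueField O'))
    (hli : LinearIndependent (ResidueField O) (fun i : s => (i : ResidueField O'))) :
    s.card ≤ Module.finrank K L := by
  classical
  have hsurj := IsLocalRing.residue_surjective (R := O')
  choose lift hlift using hsurj
  set ξ : s → L := fun i => ((lift i : O') : L) with hξ
  have hind : LinearIndependent K ξ := by
    rw [Fintype.linearIndependent_iff]
    intro g hg
    by_contra hc
    push_neg at hc
    obtain ⟨i₀, hi₀⟩ := hc
    obtain ⟨j, -, hj⟩ := Finset.exists_max_image Finset.univ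
      (fun i => O.valuation (g i)) ⟨i₀, Finset.mem_univ i₀⟩
    have hgj : g j ≠ 0 := by
      intro h
      apply hi₀
      have := hj i₀ (Finset.mem_univ i₀)
      rw [h, map_zero, le_zero_iff, Valuation.zero_iff] at this
      exact this
    set b : s → K := fun i => g i / g j with hb
    have hbO : ∀ i, b i ∈ O := by
      intro i
      rw [← ValuationSubring.valuation_le_one_iff]
      show O.valuation (g i / g j) ≤ 1
      rw [map_div₀]
      exact (div_le_one₀ (zero_lt_iff.mpr ((Valuation.ne_zero_iff _).mpr hgj))).mpr
        (hj i (Finset.mem_univ i))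
    have hsum' : ∑ i, b i • ξ i = 0 := by
      have h1 : ∑ i, b i • ξ i = (g j)⁻¹ • ∑ i, g i • ξ i := by
        rw [Finset.smul_sum]
        refine Finset.sum_congr rfl fun i _ => ?_
        show (g i / g j) • ξ i = (g j)⁻¹ • g i • ξ i
        rw [smul_smul, div_eq_inv_mul]
      rw [h1, hg, smul_zero]
    set B : s → O' := fun i => ⟨algebraMap K L (b i), hmem _ (hbO i)⟩ * lift i with hB
    have hB0 : ∑ i, B i = 0 := by
      have h2 : ((∑ i, B i : O') : L) = ∑ i, b i • ξ i := by
        push_cast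
        refine Finset.sum_congr rfl fun i _ => ?_
        rw [Algebra.smul_def]
        rfl
      rw [hsum'] at h2
      exact_mod_cast h2
    have hres1 : ∑ i, (residue O ⟨b i, hbO i⟩) • ((i : s) : ResidueField O') = 0 := by
      have h3 : ∑ i, residue O' (B i) = 0 := by rw [← map_sum, hB0, map_zero]
      rw [← h3]
      refine Finset.sum_congr rfl fun i _ => ?_
      rw [Algebra.smul_def, hcompat]
      show _ = residue O' (⟨algebraMap K L (b i), hmem _ (hbO i)⟩ * lift i)
      rw [map_mul, hlift]
    have := Fintype.linearIndependent_iff.mp hli (fun i => residue O ⟨b i, hbO i⟩) hres1 j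
    have hball : (⟨b j, hbO j⟩ : O) = 1 := Subtype.ext (div_self hgj)
    rw [hball, map_one] at this
    exact one_ne_zero this
  have := hind.fintype_card_le_finrank
  simpa using this

/-- Representatives of distinct cosets of the value group of `K` inside the value group of a
finite extension `L` are `K`-linearly independent; hence the ramification index is finite. -/
lemma valgroup_finite {K L : Type*} [Field K] [Field L] [Algebra K L] [FiniteDimensional K L]
    (O' : ValuationSubring L) (H : Subgroup (O'.ValueGroup)ˣ)
    (hH : ∀ g : (O'.ValueGroup)ˣ, g ∈ H ↔
      ∃ y : K, y ≠ 0 ∧ (g : O'.ValueGroup) = O'.valuation (algebraMap K L y)) :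
    Finite ((O'.ValueGroup)ˣ ⧸ H) := by
  classical
  by_contra hinf
  rw [not_finite_iff_infinite] at hinf
  set n := Module.finrank K L with hn
  set c : Fin (n + 1) → (O'.ValueGroup)ˣ ⧸ H :=
    fun i => Infinite.natEmbedding _ i.val with hc
  have hcinj : Function.Injective c :=
    (Infinite.natEmbedding _).injective.comp Fin.val_injective
  have hrep : ∀ i, ∃ u : (O'.ValueGroup)ˣ, (QuotientGroup.mk u : _ ⧸ H) = c i :=
    fun i => Quotient.exists_rep (c i)
  choose u hu using hrep
  have hxex : ∀ i, ∃ x : L, O'.valuation x = (u i : O'.ValueGroup) :=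
    fun i => O'.valuation_surjective _
  choose x hx using hxex
  have hx0 : ∀ i, x i ≠ 0 := by
    intro i h
    have := hx i
    rw [h, Valuation.map_zero] at this
    exact (u i).ne_zero this.symm
  have hind : LinearIndependent K x := by
    rw [Fintype.linearIndependent_iff]
    intro g hg
    by_contra hc'
    push_neg at hc'
    obtain ⟨i₀, hi₀⟩ := hc'
    set T : Finset (Fin (n + 1)) := Finset.univ.filter (fun i => g i ≠ 0) with hT
    have hTne : T.Nonempty := ⟨i₀, by simp [hT, hi₀]⟩
    set F : Fin (n + 1) → L := fun i => g i • x i with hF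
    have hgne : ∀ i ∈ T, g i ≠ 0 := fun i hi => (Finset.mem_filter.mp hi).2
    have hwF : ∀ i ∈ T, O'.valuation (F i) =
        O'.valuation (algebraMap K L (g i)) * (u i : O'.ValueGroup) := by
      intro i hi
      show O'.valuation (g i • x i) = _
      rw [Algebra.smul_def, Valuation.map_mul, hx]
    have hw0 : ∀ i ∈ T, O'.valuation (F i) ≠ 0 := by
      intro i hi
      rw [hwF i hi]
      refine mul_ne_zero ?_ (u i).ne_zero
      rw [Valuation.ne_zero_iff]
      simp [hgne i hi]
    have hdist : ∀ i ∈ T, ∀ i' ∈ T, i ≠ i' →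
        O'.valuation (F i) ≠ O'.valuation (F i') := by
      intro i hi i' hi' hne heq
      apply hne
      apply hcinj
      rw [← hu i, ← hu i']
      rw [hwF i hi, hwF i' hi'] at heq
      have hA : O'.valuation (algebraMap K L (g i)) ≠ 0 := by
        rw [Valuation.ne_zero_iff]; simp [hgne i hi]
      have hA' : O'.valuation (algebraMap K L (g i')) ≠ 0 := by
        rw [Valuation.ne_zero_iff]; simp [hgne i' hi']
      have key : ((u i' * (u i)⁻¹ : (O'.ValueGroupˣ)) : O'.ValueGroup) =
          O'.valuation (algebraMap K L (g i / g i')) := by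
        rw [Units.val_mul, Units.val_inv_eq_inv_val, map_div₀, map_div₀,
          eq_div_iff hA']
        have h2 : O'.valuation (algebraMap K L (g i')) * (u i' : O'.ValueGroup) *
            ((u i : O'.ValueGroup))⁻¹ = O'.valuation (algebraMap K L (g i)) := by
          rw [← heq, mul_assoc, mul_inv_cancel₀ (u i).ne_zero, mul_one]
        rw [mul_comm, ← mul_assoc]
        exact h2
      have hmemH : u i' * (u i)⁻¹ ∈ H := by
        rw [hH]
        exact ⟨g i / g i', div_ne_zero (hgne i hi) (hgne i' hi'), key⟩
      rw [QuotientGroup.eq]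
      rwa [mul_comm] at hmemH
    obtain ⟨j, hjT, hjmax⟩ := T.exists_max_image (fun i => O'.valuation (F i)) hTne
    have hstrict : ∀ i, i ∈ T → i ≠ j → O'.valuation (F i) < O'.valuation (F j) :=
      fun i hi hne => lt_of_le_of_ne (hjmax i hi) (hdist i hi j hjT hne)
    have hsum : ∑ i ∈ T, F i = 0 := by
      rw [Finset.sum_subset (Finset.subset_univ T)
        (fun i _ hiT => by
          have : g i = 0 := by
            by_contra h
            exact hiT (Finset.mem_filter.mpr ⟨Finset.mem_univ i, h⟩)
          show g i • x i = 0
          rw [this, zero_smul])]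
      exact hg
    have := Valuation.map_sum_eq_of_lt O'.valuation hjT (by
      intro i hi
      have hi' : i ∈ T ∧ i ≠ j := by simpa [Finset.mem_sdiff] using hi
      exact hstrict i hi'.1 hi'.2)
    rw [hsum, Valuation.map_zero] at this
    exact hw0 j hjT this.symm
  have hcard := hind.fintype_card_le_finrank
  simp only [Fintype.card_fin] at hcard
  omega

/-- Let `(K, v)` be a henselian valued field of equicharacteristic `p > 0`
which is algebraically maximal, with `p`-divisible value group, perfect residue field having
no finite extension of degree divisible by `p`. Then for every finite extension `(L, w)` of
`(K, v)`, the ramification index `e(w/v)` (the index of the value group of `K` in that of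
`L`) and the residue degree `f(w/v)` are both prime to `p`. -/
theorem tame_of_algMax_pdivisible {K : Type u} [Field K]
    (O : ValuationSubring K) [HenselianLocalRing O] (p : ℕ) [Fact p.Prime] [CharP K p]
    (hdiv : ∀ x : K, x ≠ 0 → ∃ y : K, O.valuation x = O.valuation y ^ p)
    (hperf : ∀ x : IsLocalRing.ResidueField O, ∃ y, y ^ p = x)
    (hres : ∀ (k' : Type u) [Field k'] [Algebra (IsLocalRing.ResidueField O) k']
      [FiniteDimensional (IsLocalRing.ResidueField O) k'],
      ¬ p ∣ Module.finrank (IsLocalRing.ResidueField O) k')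
    (hmax : ValuationSubring.IsAlgMax K O)
    (L : Type u) [Field L] [Algebra K L] [FiniteDimensional K L]
    (O' : ValuationSubring L) (hcomap : O'.comap (algebraMap K L) = O)
    -- the subgroup of the value group of `L` coming from values of `K`
    (H : Subgroup (O'.ValueGroup)ˣ)
    (hH : ∀ g : (O'.ValueGroup)ˣ, g ∈ H ↔
      ∃ y : K, y ≠ 0 ∧ (g : O'.ValueGroup) = O'.valuation (algebraMap K L y))
    -- the residue field extension
    (hmem : ∀ y : K, y ∈ O → algebraMap K L y ∈ O')
    [Algebra (IsLocalRing.ResidueField O) (IsLocalRing.ResidueField O')]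
    (hcompat : ∀ (y : K) (hy : y ∈ O),
      algebraMap (IsLocalRing.ResidueField O) (IsLocalRing.ResidueField O')
          (IsLocalRing.residue O ⟨y, hy⟩) =
        IsLocalRing.residue O' ⟨algebraMap K L y, hmem y hy⟩) :
    ¬ p ∣ Nat.card ((O'.ValueGroup)ˣ ⧸ H) ∧
    ¬ p ∣ Module.finrank (IsLocalRing.ResidueField O) (IsLocalRing.ResidueField O') := by
  have hp : p.Prime := Fact.out
  constructor
  · -- the ramification index is prime to `p`
    have hfin : Finite ((O'.ValueGroup)ˣ ⧸ H) := valgroup_finite O' H hH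
    intro hpdvd
    obtain ⟨g, hg⟩ := exists_prime_orderOf_dvd_card' (G := (O'.ValueGroup)ˣ ⧸ H) p hpdvd
    obtain ⟨u, hu⟩ : ∃ u : (O'.ValueGroup)ˣ, (QuotientGroup.mk u : _ ⧸ H) = g :=
      Quotient.exists_rep g
    have hgp : g ^ p = 1 := by rw [← hg]; exact pow_orderOf_eq_one g
    have hup : u ^ p ∈ H := by
      rw [← QuotientGroup.eq_one_iff, QuotientGroup.mk_pow, hu, hgp]
    obtain ⟨y, hy0, hyval⟩ := (hH _).mp hup
    obtain ⟨z, hz⟩ := hdiv y hy0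
    have hz0 : z ≠ 0 := by
      rintro rfl
      rw [map_zero, zero_pow hp.ne_zero] at hz
      exact hy0 ((Valuation.zero_iff _).mp hz)
    have hvy : O.valuation y = O.valuation (z ^ p) := by rw [map_pow]; exact hz
    have hw : O'.valuation (algebraMap K L y) = O'.valuation (algebraMap K L z) ^ p := by
      have := (val_eq_val_iff (algebraMap K L) O O' hcomap y (z ^ p)).mp hvy
      rwa [map_pow, map_pow] at this
    have hwz0 : O'.valuation (algebraMap K L z) ≠ 0 := by
      rw [Valuation.ne_zero_iff]; simp [hz0]
    set t : (O'.ValueGroup)ˣ := Units.mk0 _ hwz0 with ht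
    have hut : u ^ p = t ^ p := by
      apply Units.ext
      rw [Units.val_pow_eq_pow_val]
      calc ((u ^ p : (O'.ValueGroup)ˣ) : O'.ValueGroup)
          = O'.valuation (algebraMap K L y) := hyval
        _ = O'.valuation (algebraMap K L z) ^ p := hw
        _ = ((t : O'.ValueGroup)) ^ p := rfl
    have huT : u = t := by
      have h1 : (u * t⁻¹) ^ p = 1 := by
        rw [mul_pow, inv_pow, hut, mul_inv_cancel]
      have h2 := (pow_eq_one_iff_left hp.ne_zero).mp h1
      exact mul_inv_eq_one.mp h2
    have huH : u ∈ H := (hH u).mpr ⟨z, hz0, by rw [huT]; rfl⟩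
    have hg1 : g = 1 := by rw [← hu, QuotientGroup.eq_one_iff]; exact huH
    rw [hg1, orderOf_one] at hg
    exact hp.one_lt.ne' hg.symm
  · -- the residue degree is prime to `p`
    have hrank : Module.rank (IsLocalRing.ResidueField O) (IsLocalRing.ResidueField O') ≤
        (Module.finrank K L : Cardinal) :=
      rank_le (fun s hs => residue_card_le O O' hmem hcompat s hs)
    have : Module.Finite (IsLocalRing.ResidueField O) (IsLocalRing.ResidueField O') :=
      Module.rank_lt_aleph0_iff.mp (lt_of_le_of_lt hrank (Cardinal.nat_lt_aleph0 _))
    exact hres (IsLocalRing.ResidueField O')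
end

section
/- Let K be a field of characteristic p > 0 such that K^×/(K^×)^p is finite. Then K has finite degree of imperfection, i.e., [K : K^p] is finite; in fact [K : K^p] ≤ a bound depending only on |K^×/(K^×)^p| — concretely, if |K^×/(K^×)^p| = p^n then [K : K^p] ≤ p^n. -/
/-!
Two `K^p`-linearly independent elements `x, y` cannot differ by a `p`-th power factor, since
`y = c^p x` is a `K^p`-linear relation. Hence a `K^p`-basis of `K` maps injectively into
`K^×/(K^×)^p`, which bounds `[K : K^p]` by the order of that group.
-/

open Cardinal

section UnitsQuotient

variable {k K : Type*} [Field k] [Field K] [Algebra k K]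

theorem LinearIndependent.injective_mk_units_quotient {ι : Type*} {v : ι → K}
    (hv : LinearIndependent k v) (H : Subgroup Kˣ)
    (hH : ∀ u ∈ H, (u : K) ∈ Set.range (algebraMap k K)) :
    Function.Injective fun i => (Units.mk0 (v i) (hv.ne_zero i) : Kˣ ⧸ H) := by
  intro i j hij
  obtain ⟨a, ha⟩ := hH _ (QuotientGroup.eq.mp hij)
  have hvj : (1 : k) • v j = a • v i := by
    rw [one_smul, Algebra.smul_def, ha, Units.val_mul, Units.val_inv_eq_inv_val, Units.val_mk0,
      Units.val_mk0, mul_comm, mul_inv_cancel_left₀ (hv.ne_zero i)]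
  exact (hv.eq_of_smul_apply_eq_smul_apply 1 a j i one_ne_zero hvj).symm

theorem Module.rank_le_mk_units_quotient (H : Subgroup Kˣ)
    (hH : ∀ u ∈ H, (u : K) ∈ Set.range (algebraMap k K)) :
    Module.rank k K ≤ #(Kˣ ⧸ H) := by
  let b := Basis.ofVectorSpace k K
  rw [← b.mk_eq_rank'']
  exact mk_le_of_injective (b.linearIndependent.injective_mk_units_quotient H hH)

end UnitsQuotient

theorem coe_mem_fieldRange_frobenius_of_mem_range_powMonoidHom {K : Type*} [Field K] (p : ℕ)
    [ExpChar K p] {u : Kˣ} (hu : u ∈ (powMonoidHom p : Kˣ →* Kˣ).range) :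
    (u : K) ∈ (frobenius K p).fieldRange := by
  obtain ⟨c, rfl⟩ := hu
  exact ⟨c, frobenius_def p (c : K)⟩

/-- Let `K` be a field of characteristic `p > 0` with
`|K^×/(K^×)^p| = p^n` finite. Then `K` has finite degree of imperfection, and
`[K : K^p] ≤ p^n`, where `K^p` is the range of the Frobenius. -/
theorem degree_of_imperfection_le {K : Type*} [Field K] (p : ℕ) [Fact p.Prime] [CharP K p]
    (n : ℕ) (hcard : Nat.card (Kˣ ⧸ (powMonoidHom p : Kˣ →* Kˣ).range) = p ^ n) :
    FiniteDimensional (frobenius K p).fieldRange K ∧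
      Module.finrank (frobenius K p).fieldRange K ≤ p ^ n := by
  have : Finite (Kˣ ⧸ (powMonoidHom p : Kˣ →* Kˣ).range) :=
    Nat.finite_of_card_ne_zero (hcard ▸ pow_ne_zero n (Fact.out : p.Prime).ne_zero)
  have hrank : Module.rank (frobenius K p).fieldRange K ≤ (p ^ n : ℕ) := by
    rw [← hcard, Nat.cast_card]
    exact Module.rank_le_mk_units_quotient _ fun u hu =>
      ⟨⟨u, coe_mem_fieldRange_frobenius_of_mem_range_powMonoidHom p hu⟩, rfl⟩
  exact ⟨Module.rank_lt_aleph0_iff.mp (hrank.trans_lt natCast_lt_aleph0),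
    Module.finrank_le_of_rank_le hrank⟩
end
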